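/- Almost surely, σ_∞ ≥ lim_{r→∞} liminf_{n→∞} ρ_n^{(r)} (the limit over r exists since r ↦ ρ_n^{(r)} is nondecreasing for each n and ω). -/

import Mathlib

/-!
Fix `ω` outside a null set on which (a) holds at every integer level and, for every integer
level `K`, a subsequence of `X_n^{(K)}` converges uniformly to `X_∞^{(K)}` (convergence in
probability yields an a.s. convergent subsequence). If `σ_∞ < T`, explosion provides
`t₀ < σ_∞` with `‖X_∞(t₀)‖ > r`. For `K` larger than `sup_{[0,t₀]} ‖X_∞‖` and than `r`,
`X_∞^{(K)}(t₀) = X_∞(t₀)`, so along the subsequence `‖X_n^{(K)}(t₀)‖ > r` eventually. If moreover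
`ρ_n^{(r)} > t₀`, then `X_n^{(K)}(t₀) = X_n(t₀)` has norm `≤ r` (explosion of `X_n` forces
`ρ_n^{(r)} ≤ σ_n`), which is absurd. Hence `liminf_n ρ_n^{(r)} ≤ t₀ < σ_∞` for every `r`, and the
limit in `r` exists by monotonicity.
-/

open MeasureTheory Filter Set Topology

section ExitTime

variable {E : Type*} [NormedAddCommGroup E]

/-- Adjoining `T` encodes the convention `inf ∅ := T` for `ρ^{(r)}`. -/
noncomputable def exitTime (x : ℝ → E) (s T r : ℝ) : ℝ :=
  sInf ({t : ℝ | t ∈ Ioo 0 s ∧ r < ‖x t‖} ∪ {T})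

structure IsExplosionTime (x : ℝ → E) (s T : ℝ) : Prop where
  mem : s ∈ Ioc 0 T
  frequently_lt_norm : s < T → ∀ M : ℝ, ∃ᶠ t in 𝓝[<] s, M < ‖x t‖

variable {x : ℝ → E} {s T r t : ℝ}

lemma min_zero_mem_lowerBounds_exitTime_set (x : ℝ → E) (s T r : ℝ) :
    min 0 T ∈ lowerBounds ({t : ℝ | t ∈ Ioo 0 s ∧ r < ‖x t‖} ∪ {T}) := by
  rintro t (⟨⟨ht, -⟩, -⟩ | rfl)
  · exact (min_le_left _ _).trans ht.le
  · exact min_le_right _ _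

lemma bddBelow_exitTime_set (x : ℝ → E) (s T r : ℝ) :
    BddBelow ({t : ℝ | t ∈ Ioo 0 s ∧ r < ‖x t‖} ∪ {T}) :=
  ⟨_, min_zero_mem_lowerBounds_exitTime_set x s T r⟩

lemma exitTime_le (x : ℝ → E) (s T r : ℝ) : exitTime x s T r ≤ T :=
  csInf_le (bddBelow_exitTime_set x s T r) (Or.inr rfl)

lemma min_le_exitTime (x : ℝ → E) (s T r : ℝ) : min 0 T ≤ exitTime x s T r :=
  le_csInf ⟨T, Or.inr rfl⟩ (min_zero_mem_lowerBounds_exitTime_set x s T r)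

lemma exitTime_le_of_mem (ht : t ∈ Ioo 0 s) (hr : r < ‖x t‖) : exitTime x s T r ≤ t :=
  csInf_le (bddBelow_exitTime_set x s T r) (Or.inl ⟨ht, hr⟩)

lemma exitTime_mono (x : ℝ → E) (s T : ℝ) : Monotone (exitTime x s T) := by
  intro r r' hrr'
  refine csInf_le_csInf (bddBelow_exitTime_set x s T r) ⟨T, Or.inr rfl⟩ ?_
  rintro t (⟨ht, hr'⟩ | ht)
  · exact Or.inl ⟨ht, hrr'.trans_lt hr'⟩
  · exact Or.inr ht

lemma le_exitTime_of_norm_le (htT : t ≤ T) (hx : ∀ u ∈ Ioc 0 t, ‖x u‖ ≤ r) :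
    t ≤ exitTime x s T r := by
  refine le_csInf ⟨T, Or.inr rfl⟩ ?_
  rintro u (⟨hu, hr⟩ | rfl)
  · by_contra! hut
    exact (hx u ⟨hu.1, hut.le⟩).not_gt hr
  · exact htT

lemma norm_le_of_lt_exitTime (hs : exitTime x s T r ≤ s) (ht : 0 < t)
    (hlt : t < exitTime x s T r) : ‖x t‖ ≤ r := by
  by_contra! hr
  exact hlt.not_ge (exitTime_le_of_mem ⟨ht, hlt.trans_le hs⟩ hr)

namespace IsExplosionTime

lemma exists_mem_Ioo_lt_norm (h : IsExplosionTime x s T) (hsT : s < T) (M : ℝ) :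
    ∃ t ∈ Ioo 0 s, M < ‖x t‖ := by
  obtain ⟨t, hM, ht⟩ :=
    ((h.frequently_lt_norm hsT M).and_eventually (Ioo_mem_nhdsLT h.mem.1)).exists
  exact ⟨t, ht, hM⟩

lemma exitTime_le (h : IsExplosionTime x s T) (r : ℝ) : exitTime x s T r ≤ s := by
  rcases h.mem.2.eq_or_lt with hsT | hsT
  · exact hsT ▸ _root_.exitTime_le x s T r
  · obtain ⟨t, ht, hr⟩ := h.exists_mem_Ioo_lt_norm hsT r
    exact (exitTime_le_of_mem ht hr).trans ht.2.le

end IsExplosionTime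

end ExitTime

section Sequences

variable {E : Type*} [NormedAddCommGroup E]

lemma tendsto_apply_of_tendsto_iSup_norm_sub {ι : Type*} {l : Filter ι} {f : ι → ℝ → E}
    {g : ℝ → E} {a b t : ℝ} (hf : ∀ i, ContinuousOn (f i) (Icc a b))
    (hg : ContinuousOn g (Icc a b))
    (h : Tendsto (fun i => ⨆ u : Icc a b, ‖f i u - g u‖) l (𝓝 0)) (ht : t ∈ Icc a b) :
    Tendsto (fun i => f i t) l (𝓝 (g t)) := by
  have hbdd (i : ι) : BddAbove (range fun u : Icc a b => ‖f i u - g u‖) := by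
    have := isCompact_Icc.bddAbove_image ((hf i).sub hg).norm
    rwa [image_eq_range] at this
  rw [tendsto_iff_norm_sub_tendsto_zero]
  exact squeeze_zero (fun _ => norm_nonneg _) (fun i => le_ciSup (hbdd i) ⟨t, ht⟩) h

lemma frequently_exitTime_le {ι : Type*} {l : Filter ι} {x y : ι → ℝ → E} {s : ι → ℝ} {z : E}
    {T r R t₀ : ℝ} (hexp : ∀ i, IsExplosionTime (x i) (s i) T) (hrR : r ≤ R) (ht₀ : 0 < t₀)
    (hy : ∀ i, ∀ t ∈ Icc 0 (exitTime (x i) (s i) T R), y i t = x i t)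
    (hz : MapClusterPt z l fun i => y i t₀) (hrz : r < ‖z‖) :
    ∃ᶠ i in l, exitTime (x i) (s i) T r ≤ t₀ := by
  refine (hz.frequently ((continuous_norm.tendsto z).eventually_const_lt hrz)).mono
    fun i hi => ?_
  by_contra! hlt
  have hx : ‖x i t₀‖ ≤ r := norm_le_of_lt_exitTime ((hexp i).exitTime_le r) ht₀ hlt
  rw [hy i t₀ ⟨ht₀.le, hlt.le.trans (exitTime_mono _ _ _ hrR)⟩] at hi
  exact hi.not_ge hx

variable {x : ℕ → ℝ → E} {s : ℕ → ℝ} {T : ℝ}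

lemma isBoundedUnder_ge_exitTime (r : ℝ) :
    IsBoundedUnder (· ≥ ·) atTop fun n => exitTime (x n) (s n) T r :=
  isBoundedUnder_of ⟨min 0 T, fun n => min_le_exitTime (x n) (s n) T r⟩

lemma monotone_liminf_exitTime :
    Monotone fun r => liminf (fun n => exitTime (x n) (s n) T r) atTop := fun r r' hrr' =>
  liminf_le_liminf (.of_forall fun n => exitTime_mono (x n) (s n) T hrr')
    (isBoundedUnder_ge_exitTime r)
    (isBoundedUnder_of ⟨T, fun n => exitTime_le (x n) (s n) T r'⟩).isCoboundedUnder_ge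

lemma liminf_exitTime_le {xi : ℝ → E} {si : ℝ} {R : ℕ → ℝ} {y : ℕ → ℕ → ℝ → E}
    {yi : ℕ → ℝ → E} (hexp : ∀ n, IsExplosionTime (x n) (s n) T)
    (hexpi : IsExplosionTime xi si T) (hxi : ContinuousOn xi (Ico 0 si))
    (hR : Tendsto R atTop atTop)
    (hy : ∀ n k, ∀ t ∈ Icc 0 (exitTime (x n) (s n) T (R k)), y n k t = x n t)
    (hyi : ∀ k, ∀ t ∈ Icc 0 (exitTime xi si T (R k)), yi k t = xi t)
    (hconv : ∀ k, ∀ t ∈ Icc 0 T, MapClusterPt (yi k t) atTop fun n => y n k t) (r : ℝ) :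
    liminf (fun n => exitTime (x n) (s n) T r) atTop ≤ si := by
  rcases hexpi.mem.2.eq_or_lt with hsT | hsT
  · rw [hsT]
    exact liminf_le_of_frequently_le (.of_forall fun n => exitTime_le (x n) (s n) T r)
      (isBoundedUnder_ge_exitTime r)
  obtain ⟨t₀, ht₀, hrt₀⟩ := hexpi.exists_mem_Ioo_lt_norm hsT r
  have ht₀T : t₀ ≤ T := ht₀.2.le.trans hexpi.mem.2
  obtain ⟨C, hC⟩ :=
    isCompact_Icc.exists_bound_of_continuousOn (hxi.mono (Icc_subset_Ico_right ht₀.2))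
  obtain ⟨k, hk⟩ := (hR.eventually_ge_atTop (max C r)).exists
  have hyi_t₀ : yi k t₀ = xi t₀ := hyi k t₀ ⟨ht₀.1.le, le_exitTime_of_norm_le ht₀T
    fun u hu => (hC u (Ioc_subset_Icc_self hu)).trans ((le_max_left _ _).trans hk)⟩
  have hfreq := frequently_exitTime_le hexp ((le_max_right _ _).trans hk) ht₀.1 (hy · k)
    (hconv k t₀ ⟨ht₀.1.le, ht₀T⟩) (hyi_t₀ ▸ hrt₀)
  exact (liminf_le_of_frequently_le hfreq (isBoundedUnder_ge_exitTime r)).trans ht₀.2.le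

end Sequences

theorem stmt_5_general
    {Ω : Type*} [MeasurableSpace Ω] (P : Measure Ω)
    {E : Type*} [NormedAddCommGroup E]
    (T : ℝ)
    -- the explosion times σ_n (n ∈ ℕ) and σ_∞
    (σ : ℕ → Ω → ℝ) (σi : Ω → ℝ)
    (hσmem : ∀ n ω, σ n ω ∈ Set.Ioc 0 T) (hσimem : ∀ ω, σi ω ∈ Set.Ioc 0 T)
    -- the processes X_n (n ∈ ℕ) and X_∞, jointly measurable
    (X : ℕ → ℝ → Ω → E) (Xi : ℝ → Ω → E)
    -- path continuity on [0, σ_n(ω)), and on [0,T] if σ_n(ω) = T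
    (hXicont : ∀ ω, ContinuousOn (fun t => Xi t ω) (Set.Ico 0 (σi ω)))
    -- σ_n is an explosion time: on {σ_n < T}, limsup_{t ↑ σ_n} ‖X_n(t)‖ = ∞
    (hexpl : ∀ n ω, σ n ω < T →
      ∀ M : ℝ, ∃ᶠ t in nhdsWithin (σ n ω) (Set.Iio (σ n ω)), M < ‖X n t ω‖)
    (hexpli : ∀ ω, σi ω < T →
      ∀ M : ℝ, ∃ᶠ t in nhdsWithin (σi ω) (Set.Iio (σi ω)), M < ‖Xi t ω‖)
    -- the stopping times ρ_n^{(r)} = inf { t ∈ (0, σ_n) : ‖X_n(t)‖ > r }, inf ∅ := T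
    (ρ : ℕ → ℝ → Ω → ℝ) (ρi : ℝ → Ω → ℝ)
    (hρ : ∀ n r ω, ρ n r ω = sInf ({t : ℝ | t ∈ Set.Ioo 0 (σ n ω) ∧ r < ‖X n t ω‖} ∪ {T}))
    (hρi : ∀ r ω, ρi r ω = sInf ({t : ℝ | t ∈ Set.Ioo 0 (σi ω) ∧ r < ‖Xi t ω‖} ∪ {T}))
    -- the globally defined processes X_n^{(r)} (denoted Y n r) and X_∞^{(r)} (denoted Yi r)
    (Y : ℕ → ℝ → ℝ → Ω → E) (Yi : ℝ → ℝ → Ω → E)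
    (hYcont : ∀ n r ω, Continuous fun t => Y n r t ω)
    (hYicont : ∀ r ω, Continuous fun t => Yi r t ω)
    -- assumption (a)
    (ha : ∀ n r, 0 < r → ∀ᵐ ω ∂P, ∀ t ∈ Set.Icc 0 (ρ n r ω), Y n r t ω = X n t ω)
    (hai : ∀ r, 0 < r → ∀ᵐ ω ∂P, ∀ t ∈ Set.Icc 0 (ρi r ω), Yi r t ω = Xi t ω)
    -- assumption (b): X_n^{(r)} → X_∞^{(r)} in L⁰(Ω; C([0,T]; E))
    (hb : ∀ r, 0 < r → TendstoInMeasure P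
      (fun n ω => ⨆ t : Set.Icc (0:ℝ) T, ‖Y n r (t : ℝ) ω - Yi r (t : ℝ) ω‖)
      atTop (fun _ => (0 : ℝ)))    :
    ∀ᵐ ω ∂P, ∃ L : ℝ,
      Tendsto (fun r : ℝ => liminf (fun n => ρ n r ω) atTop) atTop (nhds L) ∧
      L ≤ σi ω := by
  obtain rfl : ρ = fun n r ω => exitTime (X n · ω) (σ n ω) T r := by
    ext n r ω; exact hρ n r ω
  obtain rfl : ρi = fun r ω => exitTime (Xi · ω) (σi ω) T r := by
    ext r ω; exact hρi r ω
  choose ns hns hns_ae using fun k : ℕ =>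
    (hb ((k : ℝ) + 1) k.cast_add_one_pos).exists_seq_tendsto_ae
  filter_upwards [ae_all_iff.2 fun n => ae_all_iff.2 fun k : ℕ => ha n _ k.cast_add_one_pos,
    ae_all_iff.2 fun k : ℕ => hai _ k.cast_add_one_pos, ae_all_iff.2 hns_ae] with ω hY hYi hconv
  have hcluster (k : ℕ) (t : ℝ) (ht : t ∈ Icc 0 T) :
      MapClusterPt (Yi (k + 1) t ω) atTop fun n => Y n (k + 1) t ω :=
    ((tendsto_apply_of_tendsto_iSup_norm_sub (fun _ => (hYcont _ _ ω).continuousOn)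
      (hYicont _ ω).continuousOn (hconv k) ht).mapClusterPt).of_comp (hns k).tendsto_atTop
  have hle := liminf_exitTime_le (fun n => ⟨hσmem n ω, hexpl n ω⟩) ⟨hσimem ω, hexpli ω⟩
    (hXicont ω) (tendsto_natCast_atTop_atTop.atTop_add tendsto_const_nhds) hY hYi hcluster
  exact ⟨_, tendsto_atTop_ciSup monotone_liminf_exitTime ⟨σi ω, forall_mem_range.2 hle⟩,
    ciSup_le hle⟩

theorem stmt_5
    {Ω : Type*} [MeasurableSpace Ω] (P : Measure Ω) [IsProbabilityMeasure P]
    {E : Type*} [NormedAddCommGroup E] [NormedSpace ℝ E] [CompleteSpace E]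
    [MeasurableSpace E] [BorelSpace E]
    (T : ℝ) (hT : 0 < T)
    -- the explosion times σ_n (n ∈ ℕ) and σ_∞
    (σ : ℕ → Ω → ℝ) (σi : Ω → ℝ)
    (hσmeas : ∀ n, Measurable (σ n)) (hσimeas : Measurable σi)
    (hσmem : ∀ n ω, σ n ω ∈ Set.Ioc 0 T) (hσimem : ∀ ω, σi ω ∈ Set.Ioc 0 T)
    -- the processes X_n (n ∈ ℕ) and X_∞, jointly measurable
    (X : ℕ → ℝ → Ω → E) (Xi : ℝ → Ω → E)
    (hXmeas : ∀ n, Measurable fun p : ℝ × Ω => X n p.1 p.2)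
    (hXimeas : Measurable fun p : ℝ × Ω => Xi p.1 p.2)
    -- path continuity on [0, σ_n(ω)), and on [0,T] if σ_n(ω) = T
    (hXcont : ∀ n ω, ContinuousOn (fun t => X n t ω) (Set.Ico 0 (σ n ω)))
    (hXcontT : ∀ n ω, σ n ω = T → ContinuousOn (fun t => X n t ω) (Set.Icc 0 T))
    (hXicont : ∀ ω, ContinuousOn (fun t => Xi t ω) (Set.Ico 0 (σi ω)))
    (hXicontT : ∀ ω, σi ω = T → ContinuousOn (fun t => Xi t ω) (Set.Icc 0 T))
    -- σ_n is an explosion time: on {σ_n < T}, limsup_{t ↑ σ_n} ‖X_n(t)‖ = ∞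
    (hexpl : ∀ n ω, σ n ω < T →
      ∀ M : ℝ, ∃ᶠ t in nhdsWithin (σ n ω) (Set.Iio (σ n ω)), M < ‖X n t ω‖)
    (hexpli : ∀ ω, σi ω < T →
      ∀ M : ℝ, ∃ᶠ t in nhdsWithin (σi ω) (Set.Iio (σi ω)), M < ‖Xi t ω‖)
    -- the stopping times ρ_n^{(r)} = inf { t ∈ (0, σ_n) : ‖X_n(t)‖ > r }, inf ∅ := T
    (ρ : ℕ → ℝ → Ω → ℝ) (ρi : ℝ → Ω → ℝ)
    (hρ : ∀ n r ω, ρ n r ω = sInf ({t : ℝ | t ∈ Set.Ioo 0 (σ n ω) ∧ r < ‖X n t ω‖} ∪ {T}))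
    (hρi : ∀ r ω, ρi r ω = sInf ({t : ℝ | t ∈ Set.Ioo 0 (σi ω) ∧ r < ‖Xi t ω‖} ∪ {T}))
    -- the globally defined processes X_n^{(r)} (denoted Y n r) and X_∞^{(r)} (denoted Yi r)
    (Y : ℕ → ℝ → ℝ → Ω → E) (Yi : ℝ → ℝ → Ω → E)
    (hYmeas : ∀ n r, Measurable fun p : ℝ × Ω => Y n r p.1 p.2)
    (hYimeas : ∀ r, Measurable fun p : ℝ × Ω => Yi r p.1 p.2)
    (hYcont : ∀ n r ω, Continuous fun t => Y n r t ω)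
    (hYicont : ∀ r ω, Continuous fun t => Yi r t ω)
    -- assumption (a)
    (ha : ∀ n r, 0 < r → ∀ᵐ ω ∂P, ∀ t ∈ Set.Icc 0 (ρ n r ω), Y n r t ω = X n t ω)
    (hai : ∀ r, 0 < r → ∀ᵐ ω ∂P, ∀ t ∈ Set.Icc 0 (ρi r ω), Yi r t ω = Xi t ω)
    -- assumption (b): X_n^{(r)} → X_∞^{(r)} in L⁰(Ω; C([0,T]; E))
    (hb : ∀ r, 0 < r → TendstoInMeasure P
      (fun n ω => ⨆ t : Set.Icc (0:ℝ) T, ‖Y n r (t : ℝ) ω - Yi r (t : ℝ) ω‖)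
      atTop (fun _ => (0 : ℝ)))    :
    ∀ᵐ ω ∂P, ∃ L : ℝ,
      Tendsto (fun r : ℝ => liminf (fun n => ρ n r ω) atTop) atTop (nhds L) ∧
      L ≤ σi ω :=
  stmt_5_general P T σ σi hσmem hσimem X Xi hXicont hexpl hexpli ρ ρi hρ hρi Y Yi hYcont hYicont ha
    hai hb
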